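/- arXiv:0711.2077 — 11 statements merged into one kernel-verified Lean document; each statement's English description precedes it below -/
import Mathlib

section
/- Let f : A → Q and g : B → Q be continuous open surjections between topological spaces. Let P = {(a, b) ∈ A × B | f a = g b} with the subspace topology, and let p : P → A and p' : P → B be the two projections. Then the commutative square with sides p, p', f, g (which is a pullback square in TopCat) is also a pushout square in TopCat. -/
/-!
An open continuous surjection `f` is a quotient map. For a cocone `(i, j)` on the span of
projections out of `P`, `i` is constant on the fibres of `f`: two points of a fibre are both
paired in `P` with some `b` (surjectivity of `g`), so both are sent to `j b`. Hence `i` descends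
along `f`, and the descended map agrees with `j` after `g` because the projection `P → B` is
surjective (surjectivity of `f`), hence epi.
-/

open CategoryTheory Limits Topology

namespace TopCat

universe u

variable {X Y Z : TopCat.{u}} {f : X ⟶ Z} {g : Y ⟶ Z}

lemma inl_apply_eq_inr_apply_of_eq (s : PushoutCocone (pullbackFst f g) (pullbackSnd f g))
    {x : X} {y : Y} (h : f x = g y) : s.inl x = s.inr y :=
  ConcreteCategory.congr_hom s.condition ⟨(x, y), h⟩

lemma factorsThrough_inl_of_surjective (hg : Function.Surjective g)
    (s : PushoutCocone (pullbackFst f g) (pullbackSnd f g)) :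
    Function.FactorsThrough s.inl f := by
  intro x x' h
  obtain ⟨y, hy⟩ := hg (f x)
  rw [inl_apply_eq_inr_apply_of_eq s hy.symm, inl_apply_eq_inr_apply_of_eq s (h ▸ hy.symm)]

lemma epi_pullbackSnd_of_surjective (hf : Function.Surjective f) : Epi (pullbackSnd f g) := by
  rw [epi_iff_surjective]
  intro y
  obtain ⟨x, hx⟩ := hf (g y)
  exact ⟨⟨(x, y), hx⟩, rfl⟩

theorem isPushout_pullbackFst_pullbackSnd (hf : IsQuotientMap f) (hg : Function.Surjective g) :
    IsPushout (pullbackFst f g) (pullbackSnd f g) f g := by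
  have w : pullbackFst f g ≫ f = pullbackSnd f g ≫ g := (pullbackCone f g).condition
  have : Epi f := (epi_iff_surjective f).2 hf.surjective
  have := epi_pullbackSnd_of_surjective (g := g) hf.surjective
  let desc (s : PushoutCocone (pullbackFst f g) (pullbackSnd f g)) : Z ⟶ s.pt :=
    ofHom (hf.lift s.inl.hom (factorsThrough_inl_of_surjective hg s))
  have fac_left s : f ≫ desc s = s.inl := hom_ext (hf.lift_comp _ _)
  refine .of_isColimit (PushoutCocone.IsColimit.mk w desc fac_left (fun s => ?_) ?_)
  · rw [← cancel_epi (pullbackSnd f g), ← reassoc_of% w, fac_left, s.condition]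
  · intro s m hl _
    rw [← cancel_epi f, hl, fac_left]

end TopCat

open CategoryTheory Limits in
/-- A "perfect square" in Top — the pullback square generated by two
continuous open surjections `f : A → Q`, `g : B → Q` — is also a pushout square in
`TopCat`. -/
theorem perfect_square_is_pushout
    {A B Q : Type} [TopologicalSpace A] [TopologicalSpace B] [TopologicalSpace Q]
    (f : A → Q) (g : B → Q)
    (hfc : Continuous f) (hfs : Function.Surjective f) (hfo : IsOpenMap f)
    (hgc : Continuous g) (hgs : Function.Surjective g) :
    Nonempty (IsColimit (PushoutCocone.mk
      (f := (TopCat.ofHom (ContinuousMap.mk (fun p : {p : A × B // f p.1 = g p.2} => p.1.1)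
        (by fun_prop)) : TopCat.of {p : A × B // f p.1 = g p.2} ⟶ TopCat.of A))
      (g := (TopCat.ofHom (ContinuousMap.mk (fun p : {p : A × B // f p.1 = g p.2} => p.1.2)
        (by fun_prop)) : TopCat.of {p : A × B // f p.1 = g p.2} ⟶ TopCat.of B))
      (show TopCat.of A ⟶ TopCat.of Q from TopCat.ofHom (ContinuousMap.mk f hfc))
      (show TopCat.of B ⟶ TopCat.of Q from TopCat.ofHom (ContinuousMap.mk g hgc))
      (by ext ⟨p, hp⟩; exact hp))) :=
  ⟨(TopCat.isPushout_pullbackFst_pullbackSnd (f := TopCat.ofHom ⟨f, hfc⟩)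
    (g := TopCat.ofHom ⟨g, hgc⟩) (hfo.isQuotientMap hfc hfs) hgs).isColimit⟩
end

section
/- Suppose given topological spaces A', A, B', B and continuous maps i' : A' → A, s : A → B, s' : A' → B', i : B' → B with s ∘ i' = i ∘ s', such that the canonical map A' → {(a, b') ∈ A × B' | s a = i b'}, x ↦ (i' x, s' x), is a homeomorphism onto (i.e., the square is a pullback in Top). If i' is a topological embedding and s and s' are continuous open surjections, then i is a topological embedding. -/
/-- Descent of embeddings along open surjections: in a pullback square
whose top edge is an embedding and whose vertical edges are open surjections, the
bottom edge is an embedding. -/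
theorem descent_of_embedding_along_open_surjection
    {A' A B' B : Type*} [TopologicalSpace A'] [TopologicalSpace A]
    [TopologicalSpace B'] [TopologicalSpace B]
    (i' : A' → A) (s : A → B) (s' : A' → B') (i : B' → B)
    (hi'c : Continuous i') (hsc : Continuous s) (hs'c : Continuous s') (hic : Continuous i)
    (hcomm : s ∘ i' = i ∘ s')
    (hpb : IsHomeomorph (fun x : A' =>
      (⟨(i' x, s' x), congrFun hcomm x⟩ : {p : A × B' // s p.1 = i p.2})))
    (hi' : Topology.IsEmbedding i')
    (hss : Function.Surjective s) (hso : IsOpenMap s)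
    (hs's : Function.Surjective s') (hs'o : IsOpenMap s') :
    Topology.IsEmbedding i := by
  have hfsurj := hpb.bijective.2
  have hfinj := hpb.bijective.1
  -- injectivity of i
  have hinj : Function.Injective i := by
    intro b₁ b₂ hb
    obtain ⟨a, ha⟩ := hss (i b₁)
    obtain ⟨x₁, hx₁⟩ := hfsurj ⟨(a, b₁), ha⟩
    obtain ⟨x₂, hx₂⟩ := hfsurj ⟨(a, b₂), ha.trans hb⟩
    have h1 := congrArg Subtype.val hx₁
    have h2 := congrArg Subtype.val hx₂
    have e1 : i' x₁ = a := congrArg Prod.fst h1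
    have e2 : i' x₂ = a := congrArg Prod.fst h2
    have exx : x₁ = x₂ := hi'.injective (e1.trans e2.symm)
    have f1 : s' x₁ = b₁ := congrArg Prod.snd h1
    have f2 : s' x₂ = b₂ := congrArg Prod.snd h2
    rw [← f1, ← f2, exx]
  refine ⟨⟨le_antisymm (continuous_iff_le_induced.mp hic) ?_⟩, hinj⟩
  intro U hU
  rw [isOpen_induced_iff]
  -- hU : IsOpen U in B'
  obtain ⟨O, hO, hOeq⟩ := hi'.isInducing.isOpen_iff.mp (hU.preimage hs'c)
  refine ⟨s '' O, hso O hO, ?_⟩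
  ext b'
  constructor
  · rintro ⟨a, haO, hsa⟩
    obtain ⟨x, hx⟩ := hfsurj ⟨(a, b'), hsa⟩
    have h1 := congrArg Subtype.val hx
    have e1 : i' x = a := congrArg Prod.fst h1
    have f1 : s' x = b' := congrArg Prod.snd h1
    have : x ∈ i' ⁻¹' O := by rw [Set.mem_preimage, e1]; exact haO
    rw [hOeq] at this
    rwa [← f1]
  · intro hb
    obtain ⟨x, hx⟩ := hs's b'
    have : x ∈ s' ⁻¹' U := by rw [Set.mem_preimage, hx]; exact hb
    rw [← hOeq] at this
    exact ⟨i' x, this, by rw [← hx]; exact congrFun hcomm x⟩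
end

section
/- Suppose given topological spaces A', A, B', B and continuous maps i' : A' → A, s : A → B, s' : A' → B', i : B' → B with s ∘ i' = i ∘ s', such that the canonical map A' → {(a, b') ∈ A × B' | s a = i b'}, x ↦ (i' x, s' x), is a homeomorphism onto (i.e., the square is a pullback in Top). If i' is a closed topological embedding and s and s' are continuous open surjections, then i is a closed topological embedding. -/
/-- Descent of closed (proper) embeddings along open surjections: in a
pullback square whose top edge is a closed embedding and whose vertical edges are open
surjections, the bottom edge is a closed embedding. -/
theorem descent_of_closed_embedding_along_open_surjection
    {A' A B' B : Type*} [TopologicalSpace A'] [TopologicalSpace A]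
    [TopologicalSpace B'] [TopologicalSpace B]
    (i' : A' → A) (s : A → B) (s' : A' → B') (i : B' → B)
    (hi'c : Continuous i') (hsc : Continuous s) (hs'c : Continuous s') (hic : Continuous i)
    (hcomm : s ∘ i' = i ∘ s')
    (hpb : IsHomeomorph (fun x : A' =>
      (⟨(i' x, s' x), congrFun hcomm x⟩ : {p : A × B' // s p.1 = i p.2})))
    (hi' : Topology.IsClosedEmbedding i')
    (hss : Function.Surjective s) (hso : IsOpenMap s)
    (hs's : Function.Surjective s') (hs'o : IsOpenMap s') :
    Topology.IsClosedEmbedding i := by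
  have hpbsurj : ∀ (a : A) (b' : B') (h : s a = i b'), ∃ x : A', i' x = a ∧ s' x = b' := by
    intro a b' h
    obtain ⟨x, hx⟩ := hpb.bijective.surjective ⟨(a, b'), h⟩
    exact ⟨x, congrArg (fun p => p.1.1) hx, congrArg (fun p => p.1.2) hx⟩
  -- injectivity of i
  have hinj : Function.Injective i := by
    intro b1 b2 hb
    obtain ⟨a, ha⟩ := hss (i b1)
    obtain ⟨x1, hx1a, hx1b⟩ := hpbsurj a b1 ha
    obtain ⟨x2, hx2a, hx2b⟩ := hpbsurj a b2 (ha.trans hb)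
    have : x1 = x2 := hi'.injective (hx1a.trans hx2a.symm)
    rw [← hx1b, ← hx2b, this]
  -- i is a closed map
  have hclosed : IsClosedMap i := by
    intro C hC
    have hq : Topology.IsQuotientMap s := hso.isQuotientMap hsc hss
    rw [hq.isClosed_preimage.symm]
    have hkey : s ⁻¹' (i '' C) = i' '' (s' ⁻¹' C) := by
      ext a
      constructor
      · rintro ⟨b', hb', hab⟩
        obtain ⟨x, hxa, hxb⟩ := hpbsurj a b' hab.symm
        exact ⟨x, by rw [Set.mem_preimage, hxb]; exact hb', hxa⟩
      · rintro ⟨x, hx, rfl⟩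
        exact ⟨s' x, hx, (congrFun hcomm x).symm⟩
    rw [hkey]
    exact hi'.isClosedMap _ (hC.preimage hs'c)
  exact Topology.IsClosedEmbedding.of_continuous_injective_isClosedMap hic hinj hclosed
end

section
/- Let q : X → Y be a continuous open surjection between topological spaces. Then the following are equivalent: (1) the fiber q⁻¹({y}) is connected for every y ∈ Y; (2) the preimage q⁻¹(C) is connected for every connected subset C ⊆ Y. -/
/-- For a continuous open surjection, all fibers are connected iff the
preimage of every connected subset is connected ("retroconnected" surmersions). -/
theorem open_surjection_fibers_connected_iff_preimages_connected
    {X Y : Type*} [TopologicalSpace X] [TopologicalSpace Y]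
    (q : X → Y) (hc : Continuous q) (hs : Function.Surjective q) (ho : IsOpenMap q) :
    (∀ y : Y, IsConnected (q ⁻¹' {y})) ↔
      (∀ C : Set Y, IsConnected C → IsConnected (q ⁻¹' C)) := by
  constructor
  · intro hfib C hC
    constructor
    · obtain ⟨y, hy⟩ := hC.nonempty
      obtain ⟨x, hx⟩ := hs y
      exact ⟨x, by simp [Set.mem_preimage, hx, hy]⟩
    · intro U V hU hV hUV ⟨u, huC, huU⟩ ⟨v, hvC, hvV⟩
      have hcov : C ⊆ q '' U ∪ q '' V := by
        intro y hy
        obtain ⟨x, hx⟩ := hs y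
        rcases hUV (show x ∈ q ⁻¹' C by simp [hx, hy]) with h | h
        · exact Or.inl ⟨x, h, hx⟩
        · exact Or.inr ⟨x, h, hx⟩
      obtain ⟨y, hyC, hyU, hyV⟩ := hC.2 (q '' U) (q '' V) (ho U hU) (ho V hV) hcov
        ⟨q u, huC, ⟨u, huU, rfl⟩⟩ ⟨q v, hvC, ⟨v, hvV, rfl⟩⟩
      obtain ⟨xu, hxuU, hxu⟩ := hyU
      obtain ⟨xv, hxvV, hxv⟩ := hyV
      have hsub : q ⁻¹' {y} ⊆ U ∪ V := fun x hx => hUV (by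
        simp only [Set.mem_preimage, Set.mem_singleton_iff] at hx
        simp [Set.mem_preimage, hx, hyC])
      obtain ⟨x, hxf, hxUV⟩ := (hfib y).2 U V hU hV hsub
        ⟨xu, by simp [Set.mem_preimage, hxu], hxuU⟩
        ⟨xv, by simp [Set.mem_preimage, hxv], hxvV⟩
      refine ⟨x, ?_, hxUV⟩
      simp only [Set.mem_preimage, Set.mem_singleton_iff] at hxf
      simp [Set.mem_preimage, hxf, hyC]
  · intro h y
    exact h {y} isConnected_singleton
end

section
/- Let A, B, B' be Banach spaces over a nontrivially normed complete field (e.g., ℝ), let s : A →L B be a continuous linear map admitting a continuous linear right inverse (t : B →L A with s ∘ t = id_B), and let i : B' →L B be a continuous linear map admitting a continuous linear left inverse (j : B →L B' with j ∘ i = id_{B'}). Let E = {(a, b') ∈ A × B' | s a = i b'}, a closed subspace of A × B', with projections i' : E → A and s' : E → B'. Then s' admits a continuous linear right inverse, and i' admits a continuous linear left inverse. -/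
namespace ContinuousLinearMap

variable {R M M' N : Type*} [Ring R]
  [TopologicalSpace M] [AddCommGroup M] [Module R M]
  [TopologicalSpace M'] [AddCommGroup M'] [Module R M']
  [TopologicalSpace N] [AddCommGroup N] [Module R N] [IsTopologicalAddGroup N]

def pullback (f : M →L[R] N) (g : M' →L[R] N) : Submodule R (M × M') :=
  LinearMap.ker
    ((f.comp (fst R M M') - g.comp (snd R M M') : M × M' →L[R] N) : M × M' →ₗ[R] N)

variable (f : M →L[R] N) (g : M' →L[R] N)

theorem mem_pullback {x : M × M'} : x ∈ pullback f g ↔ f x.1 = g x.2 := by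
  simp [pullback, sub_eq_zero]

def pullbackFst : pullback f g →L[R] M := (fst R M M').comp (pullback f g).subtypeL

def pullbackSnd : pullback f g →L[R] M' := (snd R M M').comp (pullback f g).subtypeL

variable {f g}

theorem exists_rightInverse_pullbackSnd {t : N →L[R] M}
    (hft : f.comp t = ContinuousLinearMap.id R N) :
    ∃ σ : M' →L[R] pullback f g, (pullbackSnd f g).comp σ = ContinuousLinearMap.id R M' := by
  have hft' (y : N) : f (t y) = y := congr($hft y)
  refine ⟨((t.comp g).prod (ContinuousLinearMap.id R M')).codRestrict _ fun y => ?_, ?_⟩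
  · simp [mem_pullback, hft']
  · ext y; rfl

/-- The retraction is `x ↦ (x - t (f x) + t (g (j (f x))), j (f x))`: replace the component of
`x` along `t` by one whose image under `f` lies in the range of `g`. -/
theorem exists_leftInverse_pullbackFst [IsTopologicalAddGroup M]
    {t : N →L[R] M} (hft : f.comp t = ContinuousLinearMap.id R N)
    {j : N →L[R] M'} (hjg : j.comp g = ContinuousLinearMap.id R M') :
    ∃ ρ : M →L[R] pullback f g,
      ρ.comp (pullbackFst f g) = ContinuousLinearMap.id R (pullback f g) := by
  have hft' (y : N) : f (t y) = y := congr($hft y)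
  have hjg' (y : M') : j (g y) = y := congr($hjg y)
  refine ⟨((ContinuousLinearMap.id R M - t.comp f + t.comp (g.comp (j.comp f))).prod
    (j.comp f)).codRestrict _ fun x => ?_, ?_⟩
  · simp [mem_pullback, hft']
  · ext ⟨⟨x, y⟩, hxy⟩ <;> rw [mem_pullback] at hxy <;>
      simp [pullbackFst, coe_codRestrict_apply, hxy, hjg']

end ContinuousLinearMap

theorem banach_parallel_transfer_general
    {A B B' : Type*}
    [NormedAddCommGroup A] [NormedSpace ℝ A]
    [NormedAddCommGroup B] [NormedSpace ℝ B]
    [NormedAddCommGroup B'] [NormedSpace ℝ B']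
    (s : A →L[ℝ] B) (t : B →L[ℝ] A) (hst : s.comp t = ContinuousLinearMap.id ℝ B)
    (i : B' →L[ℝ] B) (j : B →L[ℝ] B') (hji : j.comp i = ContinuousLinearMap.id ℝ B') :
    (∃ σ : B' →L[ℝ] (LinearMap.ker (((s.comp (ContinuousLinearMap.fst ℝ A B') -
        i.comp (ContinuousLinearMap.snd ℝ A B') : A × B' →L[ℝ] B) : A × B' →ₗ[ℝ] B))),
      ((ContinuousLinearMap.snd ℝ A B').comp
        (Submodule.subtypeL (LinearMap.ker (((s.comp (ContinuousLinearMap.fst ℝ A B') -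
          i.comp (ContinuousLinearMap.snd ℝ A B') : A × B' →L[ℝ] B) : A × B' →ₗ[ℝ] B))))).comp σ =
        ContinuousLinearMap.id ℝ B') ∧
    (∃ j' : A →L[ℝ] (LinearMap.ker (((s.comp (ContinuousLinearMap.fst ℝ A B') -
        i.comp (ContinuousLinearMap.snd ℝ A B') : A × B' →L[ℝ] B) : A × B' →ₗ[ℝ] B))),
      j'.comp ((ContinuousLinearMap.fst ℝ A B').comp
        (Submodule.subtypeL (LinearMap.ker (((s.comp (ContinuousLinearMap.fst ℝ A B') -
          i.comp (ContinuousLinearMap.snd ℝ A B') : A × B' →L[ℝ] B) : A × B' →ₗ[ℝ] B))))) =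
        ContinuousLinearMap.id ℝ (LinearMap.ker (((s.comp (ContinuousLinearMap.fst ℝ A B') -
          i.comp (ContinuousLinearMap.snd ℝ A B') : A × B' →L[ℝ] B) : A × B' →ₗ[ℝ] B)))) :=
  ⟨ContinuousLinearMap.exists_rightInverse_pullbackSnd hst,
    ContinuousLinearMap.exists_leftInverse_pullbackFst hst hji⟩

/-- Parallel transfer in the diptych Ban: if `s : A →L B` has a continuous
linear right inverse and `i : B' →L B` has a continuous linear left inverse, then in the
fibered product `E = {(a,b') | s a = i b'}` the projection to `B'` has a continuous
linear right inverse and the projection to `A` has a continuous linear left inverse. -/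
theorem banach_parallel_transfer
    {A B B' : Type*}
    [NormedAddCommGroup A] [NormedSpace ℝ A] [CompleteSpace A]
    [NormedAddCommGroup B] [NormedSpace ℝ B] [CompleteSpace B]
    [NormedAddCommGroup B'] [NormedSpace ℝ B'] [CompleteSpace B']
    (s : A →L[ℝ] B) (t : B →L[ℝ] A) (hst : s.comp t = ContinuousLinearMap.id ℝ B)
    (i : B' →L[ℝ] B) (j : B →L[ℝ] B') (hji : j.comp i = ContinuousLinearMap.id ℝ B') :
    (∃ σ : B' →L[ℝ] (LinearMap.ker (((s.comp (ContinuousLinearMap.fst ℝ A B') -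
        i.comp (ContinuousLinearMap.snd ℝ A B') : A × B' →L[ℝ] B) : A × B' →ₗ[ℝ] B))),
      ((ContinuousLinearMap.snd ℝ A B').comp
        (Submodule.subtypeL (LinearMap.ker (((s.comp (ContinuousLinearMap.fst ℝ A B') -
          i.comp (ContinuousLinearMap.snd ℝ A B') : A × B' →L[ℝ] B) : A × B' →ₗ[ℝ] B))))).comp σ =
        ContinuousLinearMap.id ℝ B') ∧
    (∃ j' : A →L[ℝ] (LinearMap.ker (((s.comp (ContinuousLinearMap.fst ℝ A B') -
        i.comp (ContinuousLinearMap.snd ℝ A B') : A × B' →L[ℝ] B) : A × B' →ₗ[ℝ] B))),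
      j'.comp ((ContinuousLinearMap.fst ℝ A B').comp
        (Submodule.subtypeL (LinearMap.ker (((s.comp (ContinuousLinearMap.fst ℝ A B') -
          i.comp (ContinuousLinearMap.snd ℝ A B') : A × B' →L[ℝ] B) : A × B' →ₗ[ℝ] B))))) =
        ContinuousLinearMap.id ℝ (LinearMap.ker (((s.comp (ContinuousLinearMap.fst ℝ A B') -
          i.comp (ContinuousLinearMap.snd ℝ A B') : A × B' →L[ℝ] B) : A × B' →ₗ[ℝ] B)))) :=
  banach_parallel_transfer_general s t hst i j hji
end

section
/- Let A, B, B' be Banach spaces over a nontrivially normed complete field (e.g., ℝ), let s : A →L B be a continuous linear map admitting a continuous linear right inverse (t : B →L A with s ∘ t = id_B), and let i : B' →L B be any continuous linear map. Let E = {(a, b') ∈ A × B' | s a = i b'}, a closed subspace of A × B', with first projection i' : E → A. If i' admits a continuous linear left inverse, then i admits a continuous linear left inverse. -/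
/-!
A right inverse `t` of `s` yields the section `b' ↦ (t (i b'), b')` of the fibered product over
`B'`, through which `t ∘ i` factors. Hence, if `j'` is a left inverse of the projection to `A`,
then `snd ∘ j' ∘ t` is a left inverse of `i`.
-/

namespace ContinuousLinearMap

variable {R : Type*} [Ring R] {A B B' : Type*}
  [TopologicalSpace A] [AddCommGroup A] [Module R A]
  [TopologicalSpace B] [AddCommGroup B] [Module R B] [IsTopologicalAddGroup B]
  [TopologicalSpace B'] [AddCommGroup B'] [Module R B']

abbrev fiberedProduct (s : A →L[R] B) (i : B' →L[R] B) : Submodule R (A × B') :=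
  LinearMap.ker ((s.comp (fst R A B') - i.comp (snd R A B') : A × B' →L[R] B) : A × B' →ₗ[R] B)

theorem mem_fiberedProduct {s : A →L[R] B} {i : B' →L[R] B} {p : A × B'} :
    p ∈ fiberedProduct s i ↔ s p.1 = i p.2 := by
  simp [sub_eq_zero]

def fiberedProductLift (s : A →L[R] B) (i : B' →L[R] B) (t : B →L[R] A)
    (hst : s.comp t = ContinuousLinearMap.id R B) : B' →L[R] fiberedProduct s i :=
  ((t.comp i).prod (ContinuousLinearMap.id R B')).codRestrict _ fun b' =>
    mem_fiberedProduct.2 (DFunLike.congr_fun hst (i b'))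

variable {s : A →L[R] B} {i : B' →L[R] B} {t : B →L[R] A}
  {hst : s.comp t = ContinuousLinearMap.id R B}

theorem fst_comp_subtypeL_comp_fiberedProductLift :
    (fst R A B').comp ((fiberedProduct s i).subtypeL.comp (fiberedProductLift s i t hst)) =
      t.comp i :=
  rfl

theorem snd_comp_subtypeL_comp_fiberedProductLift :
    (snd R A B').comp ((fiberedProduct s i).subtypeL.comp (fiberedProductLift s i t hst)) =
      ContinuousLinearMap.id R B' :=
  rfl

end ContinuousLinearMap

open ContinuousLinearMap

theorem banach_descent_general
    {A B B' : Type*}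
    [NormedAddCommGroup A] [NormedSpace ℝ A]
    [NormedAddCommGroup B] [NormedSpace ℝ B]
    [NormedAddCommGroup B'] [NormedSpace ℝ B']
    (s : A →L[ℝ] B) (t : B →L[ℝ] A) (hst : s.comp t = ContinuousLinearMap.id ℝ B)
    (i : B' →L[ℝ] B)
    (j' : A →L[ℝ] (LinearMap.ker (((s.comp (ContinuousLinearMap.fst ℝ A B') -
        i.comp (ContinuousLinearMap.snd ℝ A B') : A × B' →L[ℝ] B) : A × B' →ₗ[ℝ] B))))
    (hj' : j'.comp ((ContinuousLinearMap.fst ℝ A B').comp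
        (Submodule.subtypeL (LinearMap.ker (((s.comp (ContinuousLinearMap.fst ℝ A B') -
          i.comp (ContinuousLinearMap.snd ℝ A B') : A × B' →L[ℝ] B) : A × B' →ₗ[ℝ] B))))) =
        ContinuousLinearMap.id ℝ (LinearMap.ker (((s.comp (ContinuousLinearMap.fst ℝ A B') -
          i.comp (ContinuousLinearMap.snd ℝ A B') : A × B' →L[ℝ] B) : A × B' →ₗ[ℝ] B)))) :
    ∃ j : B →L[ℝ] B', j.comp i = ContinuousLinearMap.id ℝ B' := by
  let E := fiberedProduct s i
  let lift := fiberedProductLift s i t hst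
  let p : A →L[ℝ] B' := (snd ℝ A B').comp (E.subtypeL.comp j')
  refine ⟨p.comp t, ?_⟩
  calc (p.comp t).comp i
      = p.comp ((fst ℝ A B').comp (E.subtypeL.comp lift)) := by
        rw [fst_comp_subtypeL_comp_fiberedProductLift]; rfl
    _ = (snd ℝ A B').comp (E.subtypeL.comp
          ((j'.comp ((fst ℝ A B').comp E.subtypeL)).comp lift)) := rfl
    _ = ContinuousLinearMap.id ℝ B' := by
        rw [hj', id_comp, snd_comp_subtypeL_comp_fiberedProductLift]

/-- Descent in the diptych Ban: if `s : A →L B` has a continuous linear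
right inverse, `i : B' →L B` is any continuous linear map, and the first projection
`i' : E →L A` of the fibered product `E = {(a,b') | s a = i b'}` admits a continuous
linear left inverse, then `i` admits a continuous linear left inverse. -/
theorem banach_descent
    {A B B' : Type*}
    [NormedAddCommGroup A] [NormedSpace ℝ A] [CompleteSpace A]
    [NormedAddCommGroup B] [NormedSpace ℝ B] [CompleteSpace B]
    [NormedAddCommGroup B'] [NormedSpace ℝ B'] [CompleteSpace B']
    (s : A →L[ℝ] B) (t : B →L[ℝ] A) (hst : s.comp t = ContinuousLinearMap.id ℝ B)
    (i : B' →L[ℝ] B)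
    (j' : A →L[ℝ] (LinearMap.ker (((s.comp (ContinuousLinearMap.fst ℝ A B') -
        i.comp (ContinuousLinearMap.snd ℝ A B') : A × B' →L[ℝ] B) : A × B' →ₗ[ℝ] B))))
    (hj' : j'.comp ((ContinuousLinearMap.fst ℝ A B').comp
        (Submodule.subtypeL (LinearMap.ker (((s.comp (ContinuousLinearMap.fst ℝ A B') -
          i.comp (ContinuousLinearMap.snd ℝ A B') : A × B' →L[ℝ] B) : A × B' →ₗ[ℝ] B))))) =
        ContinuousLinearMap.id ℝ (LinearMap.ker (((s.comp (ContinuousLinearMap.fst ℝ A B') -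
          i.comp (ContinuousLinearMap.snd ℝ A B') : A × B' →L[ℝ] B) : A × B' →ₗ[ℝ] B)))) :
    ∃ j : B →L[ℝ] B', j.comp i = ContinuousLinearMap.id ℝ B' :=
  banach_descent_general s t hst i j' hj'
end

section
/- For n ∈ ℕ and indices i < j (with i, j in the appropriate ranges), consider the cosimplicial identity δʲ ∘ δⁱ = δⁱ ∘ δʲ⁻¹ as a commutative square of maps of types Fin(n+1) → Fin(n+2) → Fin(n+3), where for 0 ≤ k ≤ m+1 the coface map δᵏ : Fin(m+1) → Fin(m+2) is the unique strictly order-preserving injection whose image omits k. This commutative square is both a pullback square and a pushout square in the category of types. -/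
/-!
The right and bottom maps `δ_{j+1}` and `δ_i` are injections missing the distinct points `j + 1`
and `i`, so their images cover `Fin (n + 3)`. A point in both images is `δ_{j+1} b` with `b ≠ i`
(because `δ_{j+1} i = i` is missed by `δ_i`), hence comes from the corner: the square is a
pullback. A pullback of injections in `Type` whose two injections into the target are jointly
surjective is also a pushout.
-/

open CategoryTheory Limits

namespace Fin

variable {n : ℕ}

lemma succ_succAbove_succAbove_of_le {i j : Fin (n + 2)} (h : i ≤ j) (a : Fin (n + 1)) :
    j.succ.succAbove (i.succAbove a) = i.castSucc.succAbove (j.succAbove a) :=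
  congr_fun (congr_arg (fun f ↦ ⇑(SimplexCategory.Hom.toOrderHom f))
    (SimplexCategory.δ_comp_δ h)) a

lemma range_succAbove_union_range_succAbove {p q : Fin (n + 1)} (hpq : p ≠ q) :
    Set.range p.succAbove ∪ Set.range q.succAbove = Set.univ := by
  simpa [range_succAbove, ← Set.compl_inter] using hpq.symm

lemma exists_succAbove_eq_and_succAbove_eq_of_le {i j : Fin (n + 2)} (h : i ≤ j)
    {b c : Fin (n + 2)} (hbc : j.succ.succAbove b = i.castSucc.succAbove c) :
    ∃ a, i.succAbove a = b ∧ j.succAbove a = c := by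
  have hbi : b ≠ i := by
    rintro rfl
    rw [succAbove_of_castSucc_lt _ _ (castSucc_lt_succ_iff.2 h)] at hbc
    exact ne_succAbove _ _ hbc
  obtain ⟨a, rfl⟩ := exists_succAbove_eq hbi
  refine ⟨a, rfl, succAbove_right_injective (p := i.castSucc) ?_⟩
  rw [← succ_succAbove_succAbove_of_le h, hbc]

lemma isPullback_succAbove_of_le {i j : Fin (n + 2)} (h : i ≤ j) :
    IsPullback (C := Type)
      (TypeCat.ofHom (succAbove i : Fin (n + 1) → Fin (n + 2)))
      (TypeCat.ofHom (succAbove j : Fin (n + 1) → Fin (n + 2)))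
      (TypeCat.ofHom (succAbove j.succ : Fin (n + 2) → Fin (n + 3)))
      (TypeCat.ofHom (succAbove i.castSucc : Fin (n + 2) → Fin (n + 3))) :=
  (Types.isPullback_iff _ _ _ _).2
    ⟨ConcreteCategory.ext_apply (succ_succAbove_succAbove_of_le h),
      fun _ _ hab ↦ succAbove_right_injective hab.1,
      fun _ _ ↦ exists_succAbove_eq_and_succAbove_eq_of_le h⟩

end Fin

open CategoryTheory in
/-- The cosimplicial identity square `δ_{j+1} ∘ δ_i = δ_i ∘ δ_j` (for
`i ≤ j`, i.e. `i < j+1`), formed by the coface maps `δ_k = Fin.succAbove k`, is both a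
pullback and a pushout square in the category of types. -/
theorem delta_delta_square_isPullback_and_isPushout
    (n : ℕ) (i j : Fin (n + 2)) (h : i ≤ j) :
    IsPullback (C := Type)
      (TypeCat.ofHom (Fin.succAbove i : Fin (n + 1) → Fin (n + 2)))
      (TypeCat.ofHom (Fin.succAbove j : Fin (n + 1) → Fin (n + 2)))
      (TypeCat.ofHom (Fin.succAbove j.succ : Fin (n + 2) → Fin (n + 3)))
      (TypeCat.ofHom (Fin.succAbove i.castSucc : Fin (n + 2) → Fin (n + 3))) ∧
    IsPushout (C := Type)
      (TypeCat.ofHom (Fin.succAbove i : Fin (n + 1) → Fin (n + 2)))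
      (TypeCat.ofHom (Fin.succAbove j : Fin (n + 1) → Fin (n + 2)))
      (TypeCat.ofHom (Fin.succAbove j.succ : Fin (n + 2) → Fin (n + 3)))
      (TypeCat.ofHom (Fin.succAbove i.castSucc : Fin (n + 2) → Fin (n + 3))) := by
  have hPB := Fin.isPullback_succAbove_of_le h
  have : Mono (TypeCat.ofHom (Fin.succAbove j.succ : Fin (n + 2) → Fin (n + 3))) :=
    (mono_iff_injective _).2 Fin.succAbove_right_injective
  exact ⟨hPB, Types.isPushout_of_isPullback_of_mono' hPB
    (Fin.range_succAbove_union_range_succAbove (Fin.castSucc_lt_succ_iff.2 h).ne')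
    fun _ _ _ _ hxy ↦ Fin.succAbove_right_injective hxy⟩
end

section
/- For n ∈ ℕ and indices i < j (with i, j in the appropriate ranges), consider the mixed cosimplicial identity σʲ ∘ δⁱ = δⁱ ∘ σʲ⁻¹ as a commutative square of maps of types, where δᵏ : Fin(m+1) → Fin(m+2) is the unique order-preserving injection whose image omits k, and σᵏ : Fin(m+2) → Fin(m+1) is the unique order-preserving surjection taking the value k twice. This commutative square is a pullback square in the category of types. -/
/-!
The square commutes by the simplicial identity `δ_i ≫ σ_{j+1} = σ_j ≫ δ_i` for `i ≤ j`.
A commuting square of types whose horizontal maps are injective is a pullback as soon as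
every point of the upper right corner lying over the image of the bottom map comes from the
upper left corner. Here the bottom map `δ_i` misses only `i`, and since `i < j + 1` the fibre
of `σ_{j+1}` over `i` is the single point `i`, which is exactly the point missed by the top map.
-/

namespace CategoryTheory.Limits.Types

universe u

lemma isPullback_ofHom_of_injective {X₁ X₂ X₃ X₄ : Type u}
    {t : X₁ → X₂} {l : X₁ → X₃} {r : X₂ → X₄} {b : X₃ → X₄}
    (w : r ∘ t = b ∘ l) (ht : t.Injective) (hb : b.Injective)
    (hrange : r ⁻¹' Set.range b ⊆ Set.range t) :
    IsPullback (TypeCat.ofHom t) (TypeCat.ofHom l) (TypeCat.ofHom r) (TypeCat.ofHom b) := by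
  refine (isPullback_iff _ _ _ _).2 ⟨by ext x; exact congrFun w x, fun _ _ hxy ↦ ht hxy.1, ?_⟩
  intro x₂ x₃ hx
  obtain ⟨x₁, rfl⟩ := hrange ⟨x₃, hx.symm⟩
  exact ⟨x₁, rfl, hb ((congrFun w x₁).symm.trans hx)⟩

end CategoryTheory.Limits.Types

namespace Fin

lemma predAbove_eq_iff_of_lt {n : ℕ} {p i : Fin n} (h : i < p) (a : Fin (n + 1)) :
    p.predAbove a = i ↔ a = i.castSucc := by
  refine ⟨fun ha ↦ ?_, fun ha ↦ ha ▸ predAbove_castSucc_of_le _ _ h.le⟩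
  rcases le_or_gt a p.castSucc with hap | hpa
  · rw [predAbove_of_le_castSucc _ _ hap] at ha
    rw [← ha, castSucc_castPred]
  · rw [predAbove_of_castSucc_lt _ _ hpa] at ha
    subst ha
    exact absurd h (not_lt.2 ((le_pred_iff _).2 (castSucc_lt_iff_succ_le.1 hpa)))

lemma preimage_predAbove_range_succAbove {n : ℕ} {p i : Fin (n + 1)} (h : i < p) :
    p.predAbove ⁻¹' Set.range i.succAbove = Set.range i.castSucc.succAbove := by
  ext a
  simp [predAbove_eq_iff_of_lt h]

lemma predAbove_succ_comp_succAbove_castSucc {n : ℕ} {i : Fin (n + 2)} {j : Fin (n + 1)}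
    (h : i ≤ j.castSucc) :
    j.succ.predAbove ∘ i.castSucc.succAbove = i.succAbove ∘ j.predAbove := by
  funext x
  simpa [SimplexCategory.δ, SimplexCategory.σ] using
    congrArg (fun f ↦ SimplexCategory.Hom.toOrderHom f x) (SimplexCategory.δ_comp_σ_of_le h)

end Fin

open CategoryTheory in
/-- The mixed cosimplicial identity square `σ_{j+1} ∘ δ_i = δ_i ∘ σ_j`
(for `i ≤ j` as naturals, i.e. `i < j+1`), formed by the coface maps
`δ_k = Fin.succAbove k` and the codegeneracy maps `σ_k = Fin.predAbove k`, is a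
pullback square in the category of types. -/
theorem delta_sigma_square_isPullback
    (n : ℕ) (i : Fin (n + 2)) (j : Fin (n + 1)) (h : i ≤ j.castSucc) :
    IsPullback (C := Type)
      (TypeCat.ofHom (Fin.succAbove i.castSucc : Fin (n + 2) → Fin (n + 3)))
      (TypeCat.ofHom (Fin.predAbove j : Fin (n + 2) → Fin (n + 1)))
      (TypeCat.ofHom (Fin.predAbove j.succ : Fin (n + 3) → Fin (n + 2)))
      (TypeCat.ofHom (Fin.succAbove i : Fin (n + 1) → Fin (n + 2))) :=
  Limits.Types.isPullback_ofHom_of_injective (Fin.predAbove_succ_comp_succAbove_castSucc h)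
    Fin.succAbove_right_injective Fin.succAbove_right_injective
    (Fin.preimage_predAbove_range_succAbove (h.trans_lt j.castSucc_lt_succ)).le
end

section
/- For n ∈ ℕ and indices i ≤ j (with i, j in the appropriate ranges), consider the cosimplicial identity σʲ ∘ σⁱ = σⁱ ∘ σʲ⁺¹ as a commutative square of maps of types Fin(n+3) → Fin(n+2) → Fin(n+1), where σᵏ : Fin(m+2) → Fin(m+1) is the unique order-preserving surjection taking the value k twice. This commutative square is a pushout square in the category of types, but (in general, e.g., for n = 0 and i = j = 0) it is not a pullback square. -/
/-!
The square `σʲ ∘ σⁱ = σⁱ ∘ σʲ⁺¹` is a split pushout already in the simplex category: the coface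
maps `δʲ⁺¹`, `δⁱ`, `δʲ⁺²` are sections of `σʲ`, `σⁱ`, `σʲ⁺¹`, and the simplicial identities
between them force every cocone `(x, y)` to factor uniquely as `δʲ⁺¹ ≫ x`. Being described by
equations between composites, such a square stays a pushout under every functor, in particular
under the forgetful functor to types.

It is not a pullback: over the one-point set, the pair `(1, 0)` has no preimage in `Fin 3`.
-/

open CategoryTheory Limits

theorem CategoryTheory.IsPushout.of_split {C : Type*} [Category C] {A B B' D : C}
    {f : A ⟶ B} {g : A ⟶ B'} {inl : B ⟶ D} {inr : B' ⟶ D} (w : f ≫ inl = g ≫ inr)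
    {s : D ⟶ B} {t : B ⟶ A} {u : B' ⟶ A} (hs : s ≫ inl = 𝟙 D) (ht : t ≫ f = 𝟙 B)
    (htg : inl ≫ s ≫ t ≫ g = t ≫ g) (hu : u ≫ g = 𝟙 B') (huf : u ≫ f = inr ≫ s) :
    IsPushout f g inl inr := by
  refine .of_isColimit' ⟨w⟩ (PushoutCocone.IsColimit.mk _ (fun c => s ≫ c.inl) ?_ ?_ ?_)
  · intro c
    calc inl ≫ s ≫ c.inl = inl ≫ s ≫ t ≫ f ≫ c.inl := by rw [reassoc_of% ht]
      _ = t ≫ g ≫ c.inr := by rw [c.condition, reassoc_of% htg]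
      _ = c.inl := by rw [← c.condition, reassoc_of% ht]
  · intro c
    calc inr ≫ s ≫ c.inl = u ≫ g ≫ c.inr := by rw [← c.condition, reassoc_of% huf]
      _ = c.inr := by rw [reassoc_of% hu]
  · intro c m hm _
    rw [← hm, reassoc_of% hs]

namespace SimplexCategory

theorem isPushout_map_σ_σ {E : Type*} [Category E] (F : SimplexCategory ⥤ E) {n : ℕ}
    {i j : Fin (n + 1)} (H : i ≤ j) :
    IsPushout (F.map (σ i.castSucc)) (F.map (σ j.succ)) (F.map (σ j)) (F.map (σ i)) := by
  refine .of_split (s := F.map (δ j.succ)) (t := F.map (δ i.castSucc.castSucc))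
    (u := F.map (δ j.succ.succ)) ?_ ?_ ?_ ?_ ?_ ?_ <;>
    simp only [← F.map_comp, ← F.map_id]
  · rw [σ_comp_σ H]
  · rw [δ_comp_σ_succ]
  · rw [δ_comp_σ_self]
  · rw [δ_comp_σ_of_le (by simpa using H), δ_comp_σ_succ_assoc]
  · rw [δ_comp_σ_succ]
  · rw [δ_comp_σ_of_gt (by simpa [Fin.lt_def] using Nat.lt_succ_of_le H)]

end SimplexCategory

open CategoryTheory in
/-- The cosimplicial identity square `σ_j ∘ σ_i = σ_i ∘ σ_{j+1}` (for
`i ≤ j`), formed by the codegeneracy maps `σ_k = Fin.predAbove k`, is a pushout square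
in the category of types, but in general (e.g. `n = 0`, `i = j = 0`) not a pullback. -/
theorem sigma_sigma_square_isPushout_not_isPullback :
    (∀ (n : ℕ) (i j : Fin (n + 1)), i ≤ j →
      IsPushout (C := Type)
        (TypeCat.ofHom (Fin.predAbove i.castSucc : Fin (n + 3) → Fin (n + 2)))
        (TypeCat.ofHom (Fin.predAbove j.succ : Fin (n + 3) → Fin (n + 2)))
        (TypeCat.ofHom (Fin.predAbove j : Fin (n + 2) → Fin (n + 1)))
        (TypeCat.ofHom (Fin.predAbove i : Fin (n + 2) → Fin (n + 1)))) ∧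
    ¬ IsPullback (C := Type)
        (TypeCat.ofHom (Fin.predAbove (Fin.castSucc (0 : Fin 1)) : Fin 3 → Fin 2))
        (TypeCat.ofHom (Fin.predAbove (Fin.succ (0 : Fin 1)) : Fin 3 → Fin 2))
        (TypeCat.ofHom (Fin.predAbove (0 : Fin 1) : Fin 2 → Fin 1))
        (TypeCat.ofHom (Fin.predAbove (0 : Fin 1) : Fin 2 → Fin 1)) := by
  refine ⟨fun _ _ _ H => SimplexCategory.isPushout_map_σ_σ (forget SimplexCategory) H, ?_⟩
  intro h
  obtain ⟨x, hx₁, hx₂⟩ := Types.exists_of_isPullback h (1 : Fin 2) (0 : Fin 2) rfl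
  revert x
  decide
end

section
/- Let G be a groupoid. The nerve of G, a functor from the opposite of the simplex category to types, is naturally isomorphic to the composite of (the opposite of) the forgetful functor from the simplex category to the category of (nonempty finite) types, sending [n] to Fin(n+1) and a monotone map to its underlying function, with the functor sending a type S to the set of functors from the codiscrete groupoid on S to G (and a function φ : S → S' to precomposition with the induced functor of codiscrete groupoids). In particular, the nerve of a groupoid extends from the simplex category to the category of all maps between nonempty finite cardinals. -/
/-!
A functor `F` from a preorder with least element `⊥` into a groupoid is determined by its values on
the arrows `⊥ ≤ x`, since `F (x ≤ y) = F (⊥ ≤ x)⁻¹ ≫ F (⊥ ≤ y)`; the same formula defines a functor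
on the codiscrete groupoid. Hence restricting along `X ⥤ Codiscrete X` is a bijection on functors
into a groupoid. Restriction is visibly natural in monotone maps, so its inverse is the required
natural isomorphism: no naturality has to be checked for the extension.
-/

open CategoryTheory

universe u v

/-- The contravariant functor sending a type `S` to the type of functors from the
codiscrete groupoid on `S` to `G`, and a function to precomposition with the induced
functor of codiscrete groupoids. -/
def codiscreteFunctorsTo (G : Type u) [Groupoid.{v} G] :
    (Type 0)ᵒᵖ ⥤ Type (max u v) where
  obj S := Codiscrete S.unop ⥤ G
  map φ := TypeCat.ofHom fun F => Codiscrete.functor (fun x : Codiscrete _ => φ.unop x.as) ⋙ F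

namespace CategoryTheory

variable {X : Type*} [Preorder X] [OrderBot X] {G : Type u} [Groupoid.{v} G]

lemma Functor.map_eq_inv_map_bot_comp_map (F : X ⥤ G) {x y : X} (f : x ⟶ y) :
    F.map f = Groupoid.inv (F.map (homOfLE bot_le : ⊥ ⟶ x)) ≫ F.map (homOfLE bot_le) := by
  rw [Groupoid.inv_eq_inv, IsIso.eq_inv_comp, ← F.map_comp]
  rfl

noncomputable def Functor.extendToCodiscrete (F : X ⥤ G) : Codiscrete X ⥤ G where
  obj x := F.obj x.as
  map _ := Groupoid.inv (F.map (homOfLE bot_le)) ≫ F.map (homOfLE bot_le)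

namespace Codiscrete

lemma map_eq_inv_map_comp_map {A : Type*} (K : Codiscrete A ⥤ G) {x y : Codiscrete A}
    (f : x ⟶ y) (z : Codiscrete A) :
    K.map f = Groupoid.inv (K.map (iso z x).hom) ≫ K.map (iso z y).hom := by
  rw [Groupoid.inv_eq_inv, IsIso.eq_inv_comp, ← K.map_comp]
  rfl

lemma extendToCodiscrete_unitApp_comp (K : Codiscrete X ⥤ G) :
    (unitApp X ⋙ K).extendToCodiscrete = K :=
  Functor.ext (fun _ => rfl) fun _ _ f => by
    erw [eqToHom_refl, eqToHom_refl, Category.id_comp, Category.comp_id]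
    exact (map_eq_inv_map_comp_map K f (mk ⊥)).symm

lemma unitApp_comp_extendToCodiscrete (F : X ⥤ G) : unitApp X ⋙ F.extendToCodiscrete = F :=
  Functor.ext (fun _ => rfl) fun _ _ f => by
    erw [eqToHom_refl, eqToHom_refl, Category.id_comp, Category.comp_id]
    exact (F.map_eq_inv_map_bot_comp_map f).symm

variable (X G) in
noncomputable def functorEquivOfOrderBot : (Codiscrete X ⥤ G) ≃ (X ⥤ G) where
  toFun K := unitApp X ⋙ K
  invFun F := F.extendToCodiscrete
  left_inv := extendToCodiscrete_unitApp_comp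
  right_inv := unitApp_comp_extendToCodiscrete

end Codiscrete

end CategoryTheory

/-- The nerve of a groupoid `G` is naturally isomorphic to the composite
of (the opposite of) the forgetful functor `SimplexCategory ⥤ Type` (sending `[n]` to
`Fin (n+1)`) with the functor `S ↦ (Codiscrete S ⥤ G)`; in particular the nerve of a
groupoid extends from the simplex category to the category of all maps between nonempty
finite cardinals. -/
theorem nerve_iso_codiscrete_functors
    {G : Type u} [Groupoid.{v} G] :
    Nonempty (nerve G ≅ (forget SimplexCategory).op ⋙ codiscreteFunctorsTo G) :=
  ⟨(NatIso.ofComponents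
    (fun Δ => (Codiscrete.functorEquivOfOrderBot (Fin (Δ.unop.len + 1)) G).toIso)
    fun _ => by ext; rfl).symm⟩
end

section
/- Let G be a groupoid, and let f : C → A, g : C → B be functions between nonempty finite types with pushout P (so P = A ⊔ B quotiented by f c ∼ g c, with the canonical maps A → P and B → P, and P is nonempty finite). Then the commutative square of types obtained by applying S ↦ (functors from the codiscrete groupoid on S to G) and precomposition — i.e., the square with corners (Codiscrete P ⥤ G), (Codiscrete A ⥤ G), (Codiscrete B ⥤ G), (Codiscrete C ⥤ G) — is a pullback square in the category of types. -/
open CategoryTheory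

universe u v w w'

/-!
In a groupoid, a functor `F : Codiscrete S ⥤ G` is determined by the arrows `F (s₀ ⟶ s)` out of a
base point, because `F (s ⟶ t) = F (s₀ ⟶ s)⁻¹ ≫ F (s₀ ⟶ t)`; conversely any family of arrows out of
a common object defines such a functor. Taking the base point in the image of `C`, the families of
arrows of functors on `A` and on `B` that agree on `C` agree as functions on `C`, so they glue
uniquely along the pushout to a family of arrows on `P`, i.e. to a unique functor on `P`.
-/

open Limits

/-- Unlike `IsPushout.desc`, the target `X` may live in a larger universe than the square. -/
theorem CategoryTheory.Limits.Types.exists_desc_of_isPushout {A B C P : Type u}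
    {f : C → A} {g : C → B} {inl : A → P} {inr : B → P}
    (hpo : IsPushout (TypeCat.ofHom f) (TypeCat.ofHom g) (TypeCat.ofHom inl) (TypeCat.ofHom inr))
    {X : Type w} (ψA : A → X) (ψB : B → X) (h : ψA ∘ f = ψB ∘ g) :
    ∃ φ : P → X, φ ∘ inl = ψA ∧ φ ∘ inr = ψB := by
  have hc := (isColimit_iff_coconeTypesIsColimit _).1 ⟨hpo.isColimit⟩
  let c : (span (TypeCat.ofHom f) (TypeCat.ofHom g)).CoconeTypes :=
    { pt := X
      ι := fun j => match j with
        | none => ψA ∘ f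
        | some .left => ψA
        | some .right => ψB
      ι_naturality := by
        rintro _ _ (_ | (_ | _))
        · rfl
        · rfl
        · exact h.symm }
  obtain ⟨φ, hφ⟩ := hc.exists_desc c
  exact ⟨φ, hφ (some .left), hφ (some .right)⟩

theorem CategoryTheory.sigma_mk_eqToHom_comp_eq_of_arrow_mk_eq {D : Type u} [Category.{v} D]
    {x₀ X X' Y Y' : D} {φ : X ⟶ Y} {φ' : X' ⟶ Y'} (hφ : Arrow.mk φ = Arrow.mk φ')
    (h : x₀ = X) (h' : x₀ = X') :
    (⟨Y, eqToHom h ≫ φ⟩ : Σ y, x₀ ⟶ y) = ⟨Y', eqToHom h' ≫ φ'⟩ := by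
  obtain ⟨rfl, rfl, rfl⟩ := (Arrow.mk_eq_mk_iff φ φ').1 hφ
  subst h
  simp

namespace CategoryTheory.Codiscrete

variable {G : Type u} [Groupoid.{v} G] {S : Type w}

@[simps]
def ofArrowsFrom (x₀ : G) (Φ : S → Σ x, x₀ ⟶ x) : Codiscrete S ⥤ G where
  obj s := (Φ s.as).1
  map {s t} _ := Groupoid.inv (Φ s.as).2 ≫ (Φ t.as).2

def arrowsFrom (F : Codiscrete S ⥤ G) (s₀ : S) {x₀ : G} (h : x₀ = F.obj ⟨s₀⟩) :
    S → Σ x, x₀ ⟶ x :=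
  fun s => ⟨F.obj ⟨s⟩, eqToHom h ≫ F.map (iso ⟨s₀⟩ ⟨s⟩).hom⟩

theorem ofArrowsFrom_arrowsFrom (F : Codiscrete S ⥤ G) (s₀ : S) {x₀ : G}
    (h : x₀ = F.obj ⟨s₀⟩) : ofArrowsFrom x₀ (arrowsFrom F s₀ h) = F := by
  subst h
  refine Functor.hext (fun _ => rfl) fun s t φ => heq_of_eq ?_
  simp only [ofArrowsFrom_map, arrowsFrom, eqToHom_refl, Category.id_comp, Groupoid.inv_eq_inv]
  exact (IsIso.inv_comp_eq _).2 (F.map_comp _ φ)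

theorem functorOfFun_comp_ofArrowsFrom {T : Type w'} (u : T → S) (x₀ : G)
    (Φ : S → Σ x, x₀ ⟶ x) : functorOfFun u ⋙ ofArrowsFrom x₀ Φ = ofArrowsFrom x₀ (Φ ∘ u) :=
  rfl

theorem arrowsFrom_comp_eq_of_functorOfFun_comp_eq {T : Type w'} {S' : Type*} {u : T → S}
    {u' : T → S'} {F : Codiscrete S ⥤ G} {F' : Codiscrete S' ⥤ G}
    (hF : functorOfFun u ⋙ F = functorOfFun u' ⋙ F') {t₀ : T} {s₀ : S} {s₀' : S'}
    (hs₀ : u t₀ = s₀) (hs₀' : u' t₀ = s₀') {x₀ : G} (h : x₀ = F.obj ⟨s₀⟩)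
    (h' : x₀ = F'.obj ⟨s₀'⟩) : arrowsFrom F s₀ h ∘ u = arrowsFrom F' s₀' h' ∘ u' := by
  subst hs₀ hs₀'
  funext t
  have hφ : Arrow.mk (F.map (iso ⟨u t₀⟩ ⟨u t⟩).hom) = Arrow.mk (F'.map (iso ⟨u' t₀⟩ ⟨u' t⟩).hom) :=
    congrArg (fun H : Codiscrete T ⥤ G => Arrow.mk (H.map (iso ⟨t₀⟩ ⟨t⟩).hom)) hF
  exact sigma_mk_eqToHom_comp_eq_of_arrow_mk_eq hφ h h'

section Pushout

variable {A B C P : Type u} [Nonempty C] {f : C → A} {g : C → B} {inl : A → P} {inr : B → P}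

theorem functor_eq_of_isPushout
    (hpo : IsPushout (TypeCat.ofHom f) (TypeCat.ofHom g) (TypeCat.ofHom inl) (TypeCat.ofHom inr))
    {F F' : Codiscrete P ⥤ G} (hA : functorOfFun inl ⋙ F = functorOfFun inl ⋙ F')
    (hB : functorOfFun inr ⋙ F = functorOfFun inr ⋙ F') : F = F' := by
  obtain ⟨c₀⟩ := ‹Nonempty C›
  have hc₀ : inr (g c₀) = inl (f c₀) := (ConcreteCategory.congr_hom hpo.w c₀).symm
  have hobj : F.obj ⟨inl (f c₀)⟩ = F'.obj ⟨inl (f c₀)⟩ := Functor.congr_obj hA ⟨f c₀⟩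
  have hΦ : arrowsFrom F (inl (f c₀)) rfl = arrowsFrom F' (inl (f c₀)) hobj := by
    funext p
    obtain ⟨a, rfl⟩ | ⟨b, rfl⟩ := Types.eq_or_eq_of_isPushout hpo p
    · exact congrFun (arrowsFrom_comp_eq_of_functorOfFun_comp_eq hA rfl rfl _ _) a
    · exact congrFun (arrowsFrom_comp_eq_of_functorOfFun_comp_eq hB hc₀ hc₀ _ _) b
  calc F = ofArrowsFrom _ (arrowsFrom F (inl (f c₀)) rfl) := (ofArrowsFrom_arrowsFrom _ _ _).symm
    _ = ofArrowsFrom _ (arrowsFrom F' (inl (f c₀)) hobj) := by rw [hΦ]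
    _ = F' := ofArrowsFrom_arrowsFrom _ _ _

theorem exists_functor_of_isPushout
    (hpo : IsPushout (TypeCat.ofHom f) (TypeCat.ofHom g) (TypeCat.ofHom inl) (TypeCat.ofHom inr))
    (FA : Codiscrete A ⥤ G) (FB : Codiscrete B ⥤ G)
    (h : functorOfFun f ⋙ FA = functorOfFun g ⋙ FB) :
    ∃ F : Codiscrete P ⥤ G, functorOfFun inl ⋙ F = FA ∧ functorOfFun inr ⋙ F = FB := by
  obtain ⟨c₀⟩ := ‹Nonempty C›
  have hobj : FA.obj ⟨f c₀⟩ = FB.obj ⟨g c₀⟩ := Functor.congr_obj h ⟨c₀⟩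
  obtain ⟨Φ, hΦA, hΦB⟩ := Types.exists_desc_of_isPushout hpo (arrowsFrom FA (f c₀) rfl)
    (arrowsFrom FB (g c₀) hobj) (arrowsFrom_comp_eq_of_functorOfFun_comp_eq h rfl rfl _ _)
  refine ⟨ofArrowsFrom _ Φ, ?_, ?_⟩
  · rw [functorOfFun_comp_ofArrowsFrom, hΦA, ofArrowsFrom_arrowsFrom]
  · rw [functorOfFun_comp_ofArrowsFrom, hΦB, ofArrowsFrom_arrowsFrom]

end Pushout

end CategoryTheory.Codiscrete

open Codiscrete

theorem codiscrete_functors_isPullback_of_isPushout_general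
    {G : Type u} [Groupoid.{v} G]
    {A B C P : Type u}
    [Nonempty C]
    (f : C → A) (g : C → B) (inl : A → P) (inr : B → P)
    (hpo : IsPushout (C := Type u) (TypeCat.ofHom f) (TypeCat.ofHom g) (TypeCat.ofHom inl)
      (TypeCat.ofHom inr)) :
    IsPullback (C := Type (max u v))
      (TypeCat.ofHom fun F : Codiscrete P ⥤ G =>
        Codiscrete.functor (fun x : Codiscrete A => inl x.as) ⋙ F)
      (TypeCat.ofHom fun F : Codiscrete P ⥤ G =>
        Codiscrete.functor (fun x : Codiscrete B => inr x.as) ⋙ F)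
      (TypeCat.ofHom fun F : Codiscrete A ⥤ G =>
        Codiscrete.functor (fun x : Codiscrete C => f x.as) ⋙ F)
      (TypeCat.ofHom fun F : Codiscrete B ⥤ G =>
        Codiscrete.functor (fun x : Codiscrete C => g x.as) ⋙ F) := by
  have hw : inl ∘ f = inr ∘ g := funext (ConcreteCategory.congr_hom hpo.w)
  refine (Types.isPullback_iff _ _ _ _).2
    ⟨?_, fun F F' ⟨hA, hB⟩ => functor_eq_of_isPushout hpo hA hB,
      fun FA FB h => exists_functor_of_isPushout hpo FA FB h⟩
  ext F
  exact congrArg (fun u => functorOfFun u ⋙ F) hw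

/-- For a groupoid `G`, the functor `S ↦ (Codiscrete S ⥤ G)` turns
pushouts of nonempty finite types into pullbacks of types: if `P` is a pushout of
`f : C → A` and `g : C → B` (all types nonempty and finite), then the square of
precomposition maps between the types of functors from the codiscrete groupoids to `G`
is a pullback square in the category of types. -/
theorem codiscrete_functors_isPullback_of_isPushout
    {G : Type u} [Groupoid.{v} G]
    {A B C P : Type u} [Finite A] [Nonempty A] [Finite B] [Nonempty B]
    [Finite C] [Nonempty C] [Finite P] [Nonempty P]
    (f : C → A) (g : C → B) (inl : A → P) (inr : B → P)
    (hpo : IsPushout (C := Type u) (TypeCat.ofHom f) (TypeCat.ofHom g) (TypeCat.ofHom inl)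
      (TypeCat.ofHom inr)) :
    IsPullback (C := Type (max u v))
      (TypeCat.ofHom fun F : Codiscrete P ⥤ G =>
        Codiscrete.functor (fun x : Codiscrete A => inl x.as) ⋙ F)
      (TypeCat.ofHom fun F : Codiscrete P ⥤ G =>
        Codiscrete.functor (fun x : Codiscrete B => inr x.as) ⋙ F)
      (TypeCat.ofHom fun F : Codiscrete A ⥤ G =>
        Codiscrete.functor (fun x : Codiscrete C => f x.as) ⋙ F)
      (TypeCat.ofHom fun F : Codiscrete B ⥤ G =>
        Codiscrete.functor (fun x : Codiscrete C => g x.as) ⋙ F) :=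
  codiscrete_functors_isPullback_of_isPushout_general f g inl inr hpo
end
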